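/- There exists a constant c > 0 such that for every L ≥ 1, every α ∈ (0,1] and every t ≥ 0, the birth-and-death chain with parameters L and α satisfies | ‖P^t(0,·) − P^t(L,·)‖_TV − (1 − 2α/L)^t | ≤ c·L·α. -/

import Mathlib

open MeasureTheory Filter Topology

/-- Transition probabilities of the birth-and-death chain on `{0,…,L}` with parameter `α`:
`P(0,1) = P(L,L−1) = α`, `P(0,0) = P(L,L) = 1−α`, and `P(i,i+1) = P(i,i−1) = 1/2` for
`0 < i < L`. -/
noncomputable def bdKernel (L : ℕ) (α : ℝ) (i j : ℕ) : ℝ :=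
  if i = 0 then (if j = 1 then α else if j = 0 then 1 - α else 0)
  else if i = L then (if j = L - 1 then α else if j = L then 1 - α else 0)
  else if i < L then (if j = i + 1 ∨ j = i - 1 then 1 / 2 else 0)
  else 0

/-- `bdDist L α x t j = P^t(x, j)`, the probability that the birth-and-death chain started at
`x` is at state `j` at time `t`. -/
noncomputable def bdDist (L : ℕ) (α : ℝ) (x : ℕ) : ℕ → ℕ → ℝ
  | 0 => fun j => if j = x then 1 else 0
  | t + 1 => fun j => ∑ i ∈ Finset.range (L + 1), bdDist L α x t i * bdKernel L α i j

/-- Total variation distance between two distributions on the state space `{0,…,L}`. -/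
noncomputable def bdTV (L : ℕ) (μ ν : ℕ → ℝ) : ℝ :=
  ⨆ A : Set ℕ,
    |∑ i ∈ Finset.range (L + 1), Set.indicator A μ i -
      ∑ i ∈ Finset.range (L + 1), Set.indicator A ν i|

open Classical in
/-- `bdStay L α T x A = P(X_t ∈ A_t for all 0 ≤ t ≤ T | X_0 = x)` for the birth-and-death
chain with parameters `L` and `α`. -/
noncomputable def bdStay (L : ℕ) (α : ℝ) (T : ℕ) (x : ℕ) (A : ℕ → Set ℕ) : ℝ :=
  ∑ p : Fin (T + 1) → Fin (L + 1),
    if (p 0 : ℕ) = x ∧ ∀ t : Fin (T + 1), (p t : ℕ) ∈ A (t : ℕ) then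
      ∏ i : Fin T, bdKernel L α (p i.castSucc) (p i.succ) else 0

/-- The separation `S^A_T(0,L)` of a separating sequence `A` for the birth-and-death chain. -/
noncomputable def bdSep (L : ℕ) (α : ℝ) (T : ℕ) (A : ℕ → Set ℕ) : ℝ :=
  bdStay L α T 0 A + bdStay L α T L (fun t => (A t)ᶜ)

/-!
Write `D_t = P^t(0,·) - P^t(L,·)`, so the total variation is `‖D_t‖₁ / 2`. An interior state is
entered only from a neighbour, with probability `α` from the boundary or `1/2` from an interior
state, so by induction each chain keeps mass at most `2α` on every interior state. Up to `O(αL)`,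
`‖D_t‖₁` is therefore `|S_t|` with `S_t = D_t(0) - D_t(L)`.

The function `ψ(j) = L - 2j` is harmonic at interior states, and `Pψ = ψ ∓ 2α` at `0` and `L`.
Hence `M_t = ∑ⱼ D_t(j) ψ(j)` satisfies `M_{t+1} = M_t - 2α S_t`, while `M_t = L S_t + O(αL²)`.
So `M` follows the contraction `M ↦ (1 - 2α/L) M` up to an error `O(α²L)` per step. Summed
geometrically, these errors give `M_t = 2L(1 - 2α/L)^t + O(αL²)`, that is,
`S_t = 2(1 - 2α/L)^t + O(αL)`.
-/

open Finset

lemma sum_range_succ_eq_add_add_sum_Ioo {M : Type*} [AddCommMonoid M] {L : ℕ} (hL : 1 ≤ L)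
    (f : ℕ → M) : ∑ j ∈ range (L + 1), f j = f 0 + f L + ∑ j ∈ Ioo 0 L, f j := by
  rw [sum_range_succ, range_eq_Ico, sum_eq_sum_Ico_succ_bot (by omega), Ico_add_one_left_eq_Ioo]
  abel

lemma sum_range_ite_add_ite {M : Type*} [AddCommMonoid M] {L a b : ℕ} (ha : a ≤ L) (hb : b ≤ L)
    (u v : M) :
    ∑ j ∈ range (L + 1), ((if j = a then u else 0) + (if j = b then v else 0)) = u + v := by
  simp [sum_add_distrib, ha, hb]

lemma abs_sum_abs_sub_abs_sub_le {L : ℕ} (hL : 1 ≤ L) {d : ℕ → ℝ}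
    (hd : ∑ j ∈ range (L + 1), d j = 0) :
    abs ((∑ j ∈ range (L + 1), |d j|) - |d 0 - d L|) ≤ 2 * ∑ j ∈ Ioo 0 L, |d j| := by
  have hI : |d 0 + d L| ≤ ∑ j ∈ Ioo 0 L, |d j| := by
    rw [sum_range_succ_eq_add_add_sum_Ioo hL, ← eq_neg_iff_add_eq_zero] at hd
    rw [hd, abs_neg]
    exact abs_sum_le_sum_abs _ _
  have hI₀ := sum_nonneg fun j (_ : j ∈ Ioo 0 L) => abs_nonneg (d j)
  rw [sum_range_succ_eq_add_add_sum_Ioo hL, abs_le]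
  constructor
  · linarith [abs_sub (d 0) (d L)]
  · cases abs_cases (d 0) <;> cases abs_cases (d L) <;> cases abs_cases (d 0 - d L) <;>
      cases abs_cases (d 0 + d L) <;> linarith

lemma abs_sum_mul_sub_sub_le {L : ℕ} (hL : 1 ≤ L) (d : ℕ → ℝ) :
    |∑ j ∈ range (L + 1), d j * (L - 2 * j) - L * (d 0 - d L)| ≤ L * ∑ j ∈ Ioo 0 L, |d j| := by
  have hψ : ∀ j ∈ Ioo 0 L, |d j * (L - 2 * j)| ≤ L * |d j| := by
    intro j hj
    have : (j : ℝ) < L := by exact_mod_cast (mem_Ioo.mp hj).2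
    rw [abs_mul, mul_comm]
    gcongr
    exact abs_le.mpr ⟨by linarith [j.cast_nonneg (α := ℝ)], by linarith⟩
  rw [sum_range_succ_eq_add_add_sum_Ioo hL, mul_sum]
  calc _ = |∑ j ∈ Ioo 0 L, d j * (L - 2 * j)| := by push_cast; ring_nf
    _ ≤ _ := (abs_sum_le_sum_abs _ _).trans (sum_le_sum hψ)

lemma abs_le_div_one_sub_of_abs_succ_sub_mul_le {r δ : ℝ} (hr₀ : 0 ≤ r) (hr₁ : r < 1)
    {E : ℕ → ℝ} (h₀ : E 0 = 0) (hstep : ∀ t, |E (t + 1) - r * E t| ≤ δ) (t : ℕ) :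
    |E t| ≤ δ / (1 - r) := by
  have hδ : 0 ≤ δ := (abs_nonneg _).trans (hstep 0)
  have h1r : 0 < 1 - r := by linarith
  induction t with
  | zero => rw [h₀, abs_zero]; positivity
  | succ t ih =>
    calc |E (t + 1)| ≤ |E (t + 1) - r * E t| + |r * E t| := by
          linarith [abs_sub_abs_le_abs_sub (E (t + 1)) (r * E t)]
      _ ≤ δ + r * (δ / (1 - r)) := by
        rw [abs_mul, abs_of_nonneg hr₀]; gcongr; exact hstep t
      _ = δ / (1 - r) := by field_simp; ring

lemma bdTV_eq_half_sum_abs_sub {L : ℕ} {μ ν : ℕ → ℝ}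
    (hμν : ∑ i ∈ range (L + 1), μ i = ∑ i ∈ range (L + 1), ν i) :
    bdTV L μ ν = (∑ i ∈ range (L + 1), |μ i - ν i|) / 2 := by
  have hsub : ∀ A : Set ℕ, ∑ i ∈ range (L + 1), A.indicator μ i -
      ∑ i ∈ range (L + 1), A.indicator ν i = ∑ i ∈ range (L + 1), A.indicator (μ - ν) i := by
    intro A
    rw [← sum_sub_distrib]
    exact sum_congr rfl fun i _ => by rw [Set.indicator_sub']; rfl
  have hzero : ∑ i ∈ range (L + 1), (μ - ν) i = 0 := by
    simp only [Pi.sub_apply, sum_sub_distrib, hμν, sub_self]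
  -- `2 · 1_A - 1` is a sign, and the mass condition lets us subtract `∑ (μ - ν) = 0`
  have hle : ∀ A : Set ℕ, |∑ i ∈ range (L + 1), A.indicator (μ - ν) i| ≤
      (∑ i ∈ range (L + 1), |μ i - ν i|) / 2 := by
    intro A
    have h2 : 2 * ∑ i ∈ range (L + 1), A.indicator (μ - ν) i =
        ∑ i ∈ range (L + 1), (2 * A.indicator (μ - ν) i - (μ - ν) i) := by
      rw [sum_sub_distrib, hzero, sub_zero, mul_sum]
    have hsign : ∀ i, |2 * A.indicator (μ - ν) i - (μ - ν) i| = |μ i - ν i| := by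
      intro i
      by_cases hi : i ∈ A
      · rw [Set.indicator_of_mem hi, Pi.sub_apply]; congr 1; ring
      · rw [Set.indicator_of_notMem hi, Pi.sub_apply, mul_zero, zero_sub, abs_neg]
    have := abs_sum_le_sum_abs (fun i => 2 * A.indicator (μ - ν) i - (μ - ν) i) (range (L + 1))
    rw [← h2, abs_mul, abs_two] at this
    simp only [hsign] at this
    linarith
  have hpos : ∑ i ∈ range (L + 1), {i | ν i < μ i}.indicator (μ - ν) i =
      (∑ i ∈ range (L + 1), |μ i - ν i|) / 2 := by
    have : ∀ i, {i | ν i < μ i}.indicator (μ - ν) i = (|μ i - ν i| + (μ - ν) i) / 2 := by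
      intro i
      by_cases hi : ν i < μ i
      · simp [hi, abs_of_pos (sub_pos.mpr hi)]
      · simp [hi, abs_of_nonpos (sub_nonpos.mpr (not_lt.mp hi))]
    simp only [this, ← sum_div, sum_add_distrib, hzero, add_zero]
  unfold bdTV
  simp only [hsub]
  refine le_antisymm (ciSup_le hle) ?_
  rw [← hpos]
  exact (le_abs_self _).trans (le_ciSup ⟨_, Set.forall_mem_range.mpr hle⟩ {i | ν i < μ i})

lemma bdTV_mem_Icc {L : ℕ} {μ ν : ℕ → ℝ} (hμ : ∀ i, 0 ≤ μ i) (hν : ∀ i, 0 ≤ ν i)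
    (hμ₁ : ∑ i ∈ range (L + 1), μ i = 1) (hν₁ : ∑ i ∈ range (L + 1), ν i = 1) :
    bdTV L μ ν ∈ Set.Icc 0 1 := by
  rw [bdTV_eq_half_sum_abs_sub (hμ₁.trans hν₁.symm)]
  have : ∑ i ∈ range (L + 1), |μ i - ν i| ≤ ∑ i ∈ range (L + 1), (μ i + ν i) :=
    sum_le_sum fun i _ => (abs_sub _ _).trans_eq (by rw [abs_of_nonneg (hμ i), abs_of_nonneg (hν i)])
  rw [sum_add_distrib, hμ₁, hν₁] at this
  exact ⟨by positivity, by linarith⟩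

section BirthDeath

variable {L : ℕ} {α : ℝ}

lemma bdKernel_nonneg (hα₀ : 0 ≤ α) (hα₁ : α ≤ 1) (i j : ℕ) : 0 ≤ bdKernel L α i j := by
  unfold bdKernel
  split_ifs <;> linarith

lemma sum_bdKernel_zero_mul (hL : 1 ≤ L) (f : ℕ → ℝ) :
    ∑ j ∈ range (L + 1), bdKernel L α 0 j * f j = α * f 1 + (1 - α) * f 0 := by
  rw [← sum_range_ite_add_ite hL L.zero_le (α * f 1) ((1 - α) * f 0)]
  refine sum_congr rfl fun j _ => ?_
  unfold bdKernel
  split_ifs <;> first | omega | (subst_vars; ring)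

lemma sum_bdKernel_last_mul (hL : 1 ≤ L) (f : ℕ → ℝ) :
    ∑ j ∈ range (L + 1), bdKernel L α L j * f j = α * f (L - 1) + (1 - α) * f L := by
  rw [← sum_range_ite_add_ite (L.sub_le 1) le_rfl (α * f (L - 1)) ((1 - α) * f L)]
  refine sum_congr rfl fun j _ => ?_
  unfold bdKernel
  split_ifs <;> first | omega | (subst_vars; ring)

lemma sum_bdKernel_interior_mul {i : ℕ} (hi : i ∈ Ioo 0 L) (f : ℕ → ℝ) :
    ∑ j ∈ range (L + 1), bdKernel L α i j * f j = (f (i + 1) + f (i - 1)) / 2 := by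
  rw [mem_Ioo] at hi
  rw [add_div, ← sum_range_ite_add_ite (L := L) (a := i + 1) (b := i - 1) (by omega) (by omega)
    (f (i + 1) / 2) (f (i - 1) / 2)]
  refine sum_congr rfl fun j _ => ?_
  unfold bdKernel
  split_ifs <;> first | omega | (subst_vars; ring)

lemma sum_bdKernel (hL : 1 ≤ L) {i : ℕ} (hi : i ≤ L) :
    ∑ j ∈ range (L + 1), bdKernel L α i j = 1 := by
  obtain rfl | hi₀ := i.eq_zero_or_pos
  · simpa using sum_bdKernel_zero_mul (α := α) hL fun _ => 1
  obtain rfl | hiL := hi.eq_or_lt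
  · simpa using sum_bdKernel_last_mul (α := α) hL fun _ => 1
  · simpa using sum_bdKernel_interior_mul (α := α) (mem_Ioo.mpr ⟨hi₀, hiL⟩) fun _ => 1

lemma sum_bdDist_succ_mul (x t : ℕ) (f : ℕ → ℝ) :
    ∑ j ∈ range (L + 1), bdDist L α x (t + 1) j * f j =
      ∑ i ∈ range (L + 1), bdDist L α x t i * ∑ j ∈ range (L + 1), bdKernel L α i j * f j := by
  simp only [bdDist, sum_mul, mul_sum, mul_assoc]
  exact sum_comm

lemma bdDist_nonneg (hα₀ : 0 ≤ α) (hα₁ : α ≤ 1) (x t j : ℕ) : 0 ≤ bdDist L α x t j := by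
  induction t generalizing j with
  | zero => simp only [bdDist]; positivity
  | succ t ih => exact sum_nonneg fun i _ => mul_nonneg (ih i) (bdKernel_nonneg hα₀ hα₁ i j)

lemma sum_bdDist (hL : 1 ≤ L) {x : ℕ} (hx : x ≤ L) (t : ℕ) :
    ∑ j ∈ range (L + 1), bdDist L α x t j = 1 := by
  induction t with
  | zero => simp [bdDist, hx]
  | succ t ih =>
    have := sum_bdDist_succ_mul (L := L) (α := α) x t fun _ => 1
    simp only [mul_one] at this
    rw [this, ← ih]
    exact sum_congr rfl fun i hi =>
      by rw [sum_bdKernel hL (Nat.lt_succ_iff.mp (mem_range.mp hi)), mul_one]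

lemma bdDist_le_one (hα₀ : 0 ≤ α) (hα₁ : α ≤ 1) (hL : 1 ≤ L) {x : ℕ} (hx : x ≤ L) (t : ℕ)
    {j : ℕ} (hj : j ∈ range (L + 1)) : bdDist L α x t j ≤ 1 :=
  (sum_bdDist (α := α) hL hx t).symm ▸
    single_le_sum (fun i _ => bdDist_nonneg hα₀ hα₁ x t i) hj

lemma bdDist_le_of_mem_Ioo (hα₀ : 0 ≤ α) (hα₁ : α ≤ 1) (hL : 1 ≤ L) {x : ℕ} (hx : x ≤ L)
    (hx' : x ∉ Ioo 0 L) (t : ℕ) {j : ℕ} (hj : j ∈ Ioo 0 L) : bdDist L α x t j ≤ 2 * α := by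
  induction t generalizing j with
  | zero =>
    simp only [bdDist]
    rw [if_neg (by rintro rfl; exact hx' hj)]
    linarith
  | succ t ih =>
    rw [mem_Ioo] at hj
    have hterm : ∀ i ∈ range (L + 1), bdDist L α x t i * bdKernel L α i j ≤
        (if i = j - 1 then α else 0) + (if i = j + 1 then α else 0) := by
      intro i hi
      have h₀ := bdDist_nonneg hα₀ hα₁ (L := L) x t i
      have h₁ := bdDist_le_one hα₀ hα₁ hL hx t hi
      unfold bdKernel
      split_ifs <;> first
        | omega
        | nlinarith
        | nlinarith [ih (j := i) (mem_Ioo.mpr ⟨by omega, by omega⟩)]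
    calc bdDist L α x (t + 1) j
        ≤ ∑ i ∈ range (L + 1), ((if i = j - 1 then α else 0) + (if i = j + 1 then α else 0)) :=
          sum_le_sum hterm
      _ = 2 * α := by rw [sum_range_ite_add_ite (by omega) (by omega)]; ring

lemma sum_bdDist_succ_mul_moment (hL : 1 ≤ L) (x t : ℕ) :
    ∑ j ∈ range (L + 1), bdDist L α x (t + 1) j * (L - 2 * j) =
      ∑ j ∈ range (L + 1), bdDist L α x t j * (L - 2 * j)
        - 2 * α * bdDist L α x t 0 + 2 * α * bdDist L α x t L := by
  have hint : ∀ i ∈ Ioo 0 L, bdDist L α x t i * ∑ j ∈ range (L + 1), bdKernel L α i j * (L - 2 * j)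
      = bdDist L α x t i * (L - 2 * i) := by
    intro i hi
    rw [sum_bdKernel_interior_mul hi, Nat.cast_pred (mem_Ioo.mp hi).1]
    push_cast
    ring
  rw [sum_bdDist_succ_mul, sum_range_succ_eq_add_add_sum_Ioo hL, sum_congr rfl hint,
    sum_bdKernel_zero_mul hL, sum_bdKernel_last_mul hL, Nat.cast_pred hL,
    sum_range_succ_eq_add_add_sum_Ioo hL fun j => bdDist L α x t j * (L - 2 * j)]
  push_cast
  ring

noncomputable def bdDiff (L : ℕ) (α : ℝ) (t j : ℕ) : ℝ := bdDist L α 0 t j - bdDist L α L t j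

noncomputable def bdDiffMoment (L : ℕ) (α : ℝ) (t : ℕ) : ℝ :=
  ∑ j ∈ range (L + 1), bdDiff L α t j * (L - 2 * j)

lemma sum_bdDiff (hL : 1 ≤ L) (t : ℕ) : ∑ j ∈ range (L + 1), bdDiff L α t j = 0 := by
  simp only [bdDiff, sum_sub_distrib, sum_bdDist hL L.zero_le, sum_bdDist hL le_rfl, sub_self]

lemma sum_abs_bdDiff_Ioo_le (hα₀ : 0 ≤ α) (hα₁ : α ≤ 1) (hL : 1 ≤ L) (t : ℕ) :
    ∑ j ∈ Ioo 0 L, |bdDiff L α t j| ≤ 2 * α * L := by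
  have hj : ∀ j ∈ Ioo 0 L, |bdDiff L α t j| ≤ 2 * α := fun j hj =>
    abs_sub_le_of_nonneg_of_le (bdDist_nonneg hα₀ hα₁ 0 t j)
      (bdDist_le_of_mem_Ioo hα₀ hα₁ hL L.zero_le (by simp) t hj)
      (bdDist_nonneg hα₀ hα₁ L t j)
      (bdDist_le_of_mem_Ioo hα₀ hα₁ hL le_rfl (by simp) t hj)
  calc ∑ j ∈ Ioo 0 L, |bdDiff L α t j| ≤ (Ioo 0 L).card • (2 * α) := sum_le_card_nsmul _ _ _ hj
    _ ≤ L * (2 * α) := by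
      rw [nsmul_eq_mul, Nat.card_Ioo]
      gcongr
      exact_mod_cast (by omega : L - 0 - 1 ≤ L)
    _ = 2 * α * L := by ring

lemma bdDiffMoment_succ (hL : 1 ≤ L) (t : ℕ) :
    bdDiffMoment L α (t + 1) = bdDiffMoment L α t - 2 * α * (bdDiff L α t 0 - bdDiff L α t L) := by
  simp only [bdDiffMoment, bdDiff, sub_mul, sum_sub_distrib, sum_bdDist_succ_mul_moment hL]
  ring

lemma bdDiffMoment_zero (hL : 1 ≤ L) : bdDiffMoment L α 0 = 2 * L := by
  rw [bdDiffMoment, sum_range_succ_eq_add_add_sum_Ioo hL,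
    sum_eq_zero fun j hj => by simp [bdDiff, bdDist, (mem_Ioo.mp hj).1.ne', (mem_Ioo.mp hj).2.ne]]
  have hL₀ : L ≠ 0 := by omega
  simp [bdDiff, bdDist, hL₀, hL₀.symm]

lemma abs_bdDiffMoment_sub_boundary_le (hα₀ : 0 ≤ α) (hα₁ : α ≤ 1) (hL : 1 ≤ L) (t : ℕ) :
    |bdDiffMoment L α t - L * (bdDiff L α t 0 - bdDiff L α t L)| ≤ 2 * α * L ^ 2 :=
  (abs_sum_mul_sub_sub_le hL _).trans <| by
    have := sum_abs_bdDiff_Ioo_le hα₀ hα₁ hL t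
    have hL' : (0 : ℝ) ≤ L := L.cast_nonneg
    nlinarith

lemma abs_bdDiffMoment_sub_pow_le (hα₀ : 0 < α) (hα₁ : α ≤ 1) (hL : 1 ≤ L) (h2α : 2 * α ≤ L)
    (t : ℕ) : |bdDiffMoment L α t - 2 * L * (1 - 2 * α / L) ^ t| ≤ 2 * α * L ^ 2 := by
  have hL₀ : (0 : ℝ) < L := by exact_mod_cast hL
  have hρ : 0 < 2 * α / L := by positivity
  have hρ₁ : 2 * α / L ≤ 1 := (div_le_one hL₀).mpr h2α
  have key := abs_le_div_one_sub_of_abs_succ_sub_mul_le (r := 1 - 2 * α / L)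
    (δ := 2 * α / L * (2 * α * L ^ 2)) (by linarith) (by linarith)
    (E := fun t => bdDiffMoment L α t - 2 * L * (1 - 2 * α / L) ^ t)
    (by simp [bdDiffMoment_zero hL]) (fun u => ?_) t
  · convert key using 1
    field_simp
    ring
  · have h := abs_bdDiffMoment_sub_boundary_le hα₀.le hα₁ hL u
    calc _ = |2 * α / L * (bdDiffMoment L α u - L * (bdDiff L α u 0 - bdDiff L α u L))| := by
          rw [bdDiffMoment_succ hL, pow_succ]
          field_simp
          ring_nf
      _ ≤ _ := by rw [abs_mul, abs_of_pos hρ]; gcongr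

lemma abs_bdDiff_boundary_sub_pow_le (hα₀ : 0 < α) (hα₁ : α ≤ 1) (hL : 1 ≤ L)
    (h2α : 2 * α ≤ L) (t : ℕ) :
    |bdDiff L α t 0 - bdDiff L α t L - 2 * (1 - 2 * α / L) ^ t| ≤ 4 * α * L := by
  have hL₀ : (0 : ℝ) < L := by exact_mod_cast hL
  have h₁ := abs_bdDiffMoment_sub_boundary_le hα₀.le hα₁ hL t
  have h₂ := abs_bdDiffMoment_sub_pow_le hα₀ hα₁ hL h2α t
  set S := bdDiff L α t 0 - bdDiff L α t L
  set M := bdDiffMoment L α t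
  rw [← mul_le_mul_iff_of_pos_left hL₀, ← abs_of_pos hL₀, ← abs_mul, abs_of_pos hL₀]
  calc |L * (S - 2 * (1 - 2 * α / L) ^ t)| = |L * S - 2 * L * (1 - 2 * α / L) ^ t| := by ring_nf
    _ ≤ |L * S - M| + |M - 2 * L * (1 - 2 * α / L) ^ t| := abs_sub_le _ _ _
    _ ≤ 2 * α * L ^ 2 + 2 * α * L ^ 2 := by rw [abs_sub_comm]; exact add_le_add h₁ h₂
    _ = L * (4 * α * L) := by ring

lemma bdTV_bdDist_eq (hL : 1 ≤ L) (t : ℕ) :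
    bdTV L (bdDist L α 0 t) (bdDist L α L t) = (∑ j ∈ range (L + 1), |bdDiff L α t j|) / 2 :=
  bdTV_eq_half_sum_abs_sub ((sum_bdDist hL L.zero_le t).trans (sum_bdDist hL le_rfl t).symm)

lemma abs_bdTV_sub_pow_le (hα₀ : 0 < α) (hα₁ : α ≤ 1) (hL : 1 ≤ L) (h2α : 2 * α ≤ L) (t : ℕ) :
    |bdTV L (bdDist L α 0 t) (bdDist L α L t) - (1 - 2 * α / L) ^ t| ≤ 4 * α * L := by
  have hr : 0 ≤ (1 - 2 * α / L) ^ t :=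
    pow_nonneg (sub_nonneg.mpr ((div_le_one (by exact_mod_cast hL)).mpr h2α)) t
  have hbulk := (abs_sum_abs_sub_abs_sub_le hL (sum_bdDiff (α := α) hL t)).trans
    (mul_le_mul_of_nonneg_left (sum_abs_bdDiff_Ioo_le hα₀.le hα₁ hL t) zero_le_two)
  have hbdry := (abs_abs_sub_abs_le_abs_sub _ _).trans
    (abs_bdDiff_boundary_sub_pow_le hα₀ hα₁ hL h2α t)
  rw [abs_of_nonneg (by positivity : (0 : ℝ) ≤ 2 * (1 - 2 * α / L) ^ t)] at hbdry
  rw [bdTV_bdDist_eq hL, abs_le]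
  constructor <;> cases abs_le.mp hbulk <;> cases abs_le.mp hbdry <;> linarith

end BirthDeath

/-- Part (b), second claim, of the key lemma: there is a universal constant `c > 0` with
`‖P^t(0,·) − P^t(L,·)‖_TV = (1 − 2α/L)^t + O(Lα)`. -/
theorem bdTV_asymptotics :
    ∃ c : ℝ, 0 < c ∧ ∀ L : ℕ, 1 ≤ L → ∀ α : ℝ, α ∈ Set.Ioc (0 : ℝ) 1 → ∀ t : ℕ,
      |bdTV L (bdDist L α 0 t) (bdDist L α L t) - (1 - 2 * α / L) ^ t| ≤ c * L * α := by
  refine ⟨4, four_pos, fun L hL α ⟨hα₀, hα₁⟩ t => ?_⟩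
  by_cases h2α : 2 * α ≤ L
  · linarith [abs_bdTV_sub_pow_le hα₀ hα₁ hL h2α t]
  -- otherwise `L = 1` and `α > 1/2`, so `4Lα` exceeds the trivial bound `2`
  have hL₁ : L = 1 := by
    have : (L : ℝ) < 2 := by linarith
    have : L < 2 := by exact_mod_cast this
    omega
  subst hL₁
  have hTV := bdTV_mem_Icc (L := 1) (bdDist_nonneg hα₀.le hα₁ 0 t) (bdDist_nonneg hα₀.le hα₁ 1 t)
    (sum_bdDist le_rfl zero_le_one t) (sum_bdDist le_rfl le_rfl t)
  have hr : |(1 - 2 * α / (1 : ℕ)) ^ t| ≤ 1 := by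
    rw [abs_pow]
    exact pow_le_one₀ (abs_nonneg _) (abs_le.mpr ⟨by push_cast; linarith, by push_cast; linarith⟩)
  calc _ ≤ |bdTV 1 (bdDist 1 α 0 t) (bdDist 1 α 1 t)| + |(1 - 2 * α / (1 : ℕ)) ^ t| := abs_sub _ _
    _ ≤ 1 + 1 := add_le_add (abs_le.mpr ⟨by linarith [hTV.1], hTV.2⟩) hr
    _ ≤ 4 * (1 : ℕ) * α := by push_cast at h2α ⊢; linarith
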